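/- arXiv:2509.25975 — 3 statements merged into one kernel-verified Lean document; each statement's English description precedes it below -/
import Mathlib

section
/- Define Π^j = (θ_j P^j)/(A P^{j-1}) · (P^J + S Σ_{k=j}^J θ_k P^k) for j = I+1,…,J. If all forward term rates R^j are nonnegative, then Π^j R^j ≤ S for every j = I+1,…,J. -/
/-!
Nonnegative forward rates make the bond prices nonincreasing on `I, …, J`. Writing
`B = ∑_{k=j}^J θ_k P^k ≤ A`, one has `Π^j R^j = (P^{j-1} - P^j)(P^J + S B) / (A P^{j-1})`,
and `P^J + S B ≤ P^J + S A = P^I`. The claim `Π^j R^j ≤ S` then reduces to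
`P^J P^{j-1} ≤ P^j P^I`, which is monotonicity twice.
-/

open Finset

lemma le_of_forwardRate_nonneg {θ p q : ℝ} (hθ : 0 < θ) (hq : 0 < q)
    (h : 0 ≤ (p / q - 1) / θ) : q ≤ p := by
  have h' : 0 ≤ p / q - 1 := by simpa using (le_div_iff₀ hθ).mp h
  exact (one_le_div hq).mp (sub_nonneg.mp h')

lemma antitoneOn_Icc_of_forwardRate_nonneg {I J : ℕ} {θ P R : ℕ → ℝ}
    (hθ : ∀ j ∈ Icc (I + 1) J, 0 < θ j)
    (hP : ∀ j ∈ Icc I J, 0 < P j)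
    (hR : ∀ j ∈ Icc (I + 1) J, R j = (P (j - 1) / P j - 1) / θ j)
    (hRnn : ∀ j ∈ Icc (I + 1) J, 0 ≤ R j) :
    AntitoneOn P (Set.Icc I J) := by
  refine antitoneOn_of_add_one_le Set.ordConnected_Icc fun a _ ha ha1 => ?_
  have hj : a + 1 ∈ Icc (I + 1) J := by simp only [mem_Icc, Set.mem_Icc] at ha ha1 ⊢; omega
  have hnn := hRnn _ hj
  rw [hR _ hj, Nat.add_sub_cancel] at hnn
  exact le_of_forwardRate_nonneg (hθ _ hj) (hP _ (by simp only [mem_Icc] at hj ⊢; omega)) hnn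

lemma weight_mul_forwardRate {θ p pPrev A X : ℝ} (hθ : θ ≠ 0) (hp : p ≠ 0) :
    θ * p / (A * pPrev) * X * ((pPrev / p - 1) / θ) = (pPrev - p) * X / (A * pPrev) := by
  field_simp

lemma sub_mul_add_le_of_antitone {pI pPrev p pJ c : ℝ} (hpJ : 0 ≤ pJ)
    (hJ : pJ ≤ p) (hstep : p ≤ pPrev) (hI : pPrev ≤ pI)
    (hc : c ≤ pI - pJ) :
    (pPrev - p) * (pJ + c) ≤ (pI - pJ) * pPrev := by
  have hbound : pJ + c ≤ pI := by linarith
  have hcross : pJ * pPrev ≤ p * pI := mul_le_mul hJ hI (hpJ.trans (hJ.trans hstep)) (hpJ.trans hJ)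
  nlinarith [mul_le_mul_of_nonneg_left hbound (sub_nonneg.mpr hstep)]

theorem Pi_R_le_S_general
    (I J : ℕ)
    (θ P R Pi : ℕ → ℝ) (A S : ℝ)
    (hθ : ∀ j ∈ Icc (I + 1) J, 0 < θ j)
    (hP : ∀ j ∈ Icc I J, 0 < P j)
    (hR : ∀ j ∈ Icc (I + 1) J, R j = (P (j - 1) / P j - 1) / θ j)
    (hRnn : ∀ j ∈ Icc (I + 1) J, 0 ≤ R j)
    (hA : A = ∑ j ∈ Icc (I + 1) J, θ j * P j)
    (hS : S = (P I - P J) / A)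
    (hPi : ∀ j ∈ Icc (I + 1) J,
      Pi j = (θ j * P j) / (A * P (j - 1)) * (P J + S * ∑ k ∈ Icc j J, θ k * P k)) :
    ∀ j ∈ Icc (I + 1) J, Pi j * R j ≤ S := by
  intro j hj
  have hjm := mem_Icc.mp hj
  have anti : ∀ a b, I ≤ a → a ≤ b → b ≤ J → P b ≤ P a := fun a b ha hab hb =>
    antitoneOn_Icc_of_forwardRate_nonneg hθ hP hR hRnn ⟨ha, hab.trans hb⟩ ⟨ha.trans hab, hb⟩ hab
  have hterm : ∀ k ∈ Icc (I + 1) J, 0 < θ k * P k := fun k hk =>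
    mul_pos (hθ k hk) (hP k (by simp only [mem_Icc] at hk ⊢; omega))
  have hApos : 0 < A := hA ▸ sum_pos hterm ⟨j, hj⟩
  have hSA : S * A = P I - P J := by rw [hS, div_mul_cancel₀ _ hApos.ne']
  have hPprev : 0 < P (j - 1) := hP _ (by simp only [mem_Icc]; omega)
  set B := ∑ k ∈ Icc j J, θ k * P k
  have hBA : B ≤ A := hA ▸ sum_le_sum_of_subset_of_nonneg (Icc_subset_Icc_left hjm.1)
    fun k hk _ => (hterm k hk).le
  have hPiR : Pi j * R j = (P (j - 1) - P j) * (P J + S * B) / (A * P (j - 1)) := by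
    rw [hPi j hj, hR j hj]
    exact weight_mul_forwardRate (hθ j hj).ne' (hP j (by simp only [mem_Icc]; omega)).ne'
  have hS0 : 0 ≤ S :=
    hS ▸ div_nonneg (sub_nonneg.mpr (anti I J le_rfl (by omega) le_rfl)) hApos.le
  have key := sub_mul_add_le_of_antitone (c := S * B)
    (hP J (by simp only [mem_Icc]; omega)).le
    (anti j J (by omega) hjm.2 le_rfl) (anti (j - 1) j (by omega) (by omega) hjm.2)
    (anti I (j - 1) le_rfl (by omega) (by omega)) (hSA ▸ mul_le_mul_of_nonneg_left hBA hS0)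
  rw [hPiR, div_le_iff₀ (by positivity), ← mul_assoc, hSA]
  exact key

/-- If all forward term rates are nonnegative, then `Pi j * R j ≤ S` for every
`j = I+1, …, J`. -/
theorem Pi_R_le_S
    (I J : ℕ) (hIJ : I < J)
    (θ P R Pi : ℕ → ℝ) (A S : ℝ)
    (hθ : ∀ j ∈ Icc (I + 1) J, 0 < θ j)
    (hP : ∀ j ∈ Icc I J, 0 < P j)
    (hR : ∀ j ∈ Icc (I + 1) J, R j = (P (j - 1) / P j - 1) / θ j)
    (hRnn : ∀ j ∈ Icc (I + 1) J, 0 ≤ R j)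
    (hA : A = ∑ j ∈ Icc (I + 1) J, θ j * P j)
    (hS : S = (P I - P J) / A)
    (hPi : ∀ j ∈ Icc (I + 1) J,
      Pi j = (θ j * P j) / (A * P (j - 1)) * (P J + S * ∑ k ∈ Icc j J, θ k * P k)) :
    ∀ j ∈ Icc (I + 1) J, Pi j * R j ≤ S :=
  Pi_R_le_S_general I J θ P R Pi A S hθ hP hR hRnn hA hS hPi
end

section
/- The ratio R^j Π^j / S admits the decomposition R^j Π^j / S = (θ_j R^j / (1 + θ_j R^j)) · ( 1/(∏_{i=I+1}^J (1 + θ_i R^i) − 1) + (1/A) Σ_{k=j}^J θ_k P^k ), valid whenever S > 0 (equivalently P^I > P^J). -/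
open Finset

/-!
Since `1 + θ_j R^j = P^{j-1} / P^j`, the product `∏ (1 + θ_i R^i)` telescopes to `P^I / P^J`, so
`1 / (∏ (1 + θ_i R^i) - 1) = P^J / (S A)`; the identity is then a rational-function computation.
-/

theorem Finset.prod_Icc_div_telescope {G : Type*} [CommGroupWithZero G] {g : ℕ → G} {m n : ℕ}
    (hmn : m ≤ n) (hg : ∀ i ∈ Icc m n, g i ≠ 0) :
    ∏ i ∈ Icc (m + 1) n, g (i - 1) / g i = g m / g n := by
  induction n, hmn using Nat.le_induction with
  | base => simp [div_self (hg m (by simp))]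
  | succ n hmn ih =>
    rw [prod_Icc_succ_top (by omega), ih fun i hi => hg i (by simp at hi ⊢; omega),
      Nat.add_sub_cancel, div_mul_div_cancel₀ (hg n (by simp; omega))]

lemma one_add_mul_div_sub_one {K : Type*} [Field K] {θ : K} (hθ : θ ≠ 0) (x : K) :
    1 + θ * ((x - 1) / θ) = x := by
  rw [mul_div_cancel₀ _ hθ]; ring

/-- Decomposition of `R j * Pi j / S` into the two bounded pieces. -/
theorem R_Pi_over_S_decomposition
    (I J : ℕ) (hIJ : I < J)
    (θ P R Pi : ℕ → ℝ) (A S : ℝ)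
    (hθ : ∀ j ∈ Icc (I + 1) J, 0 < θ j)
    (hP : ∀ j ∈ Icc I J, 0 < P j)
    (hPIJ : P J < P I)
    (hR : ∀ j ∈ Icc (I + 1) J, R j = (P (j - 1) / P j - 1) / θ j)
    (hA : A = ∑ k ∈ Icc (I + 1) J, θ k * P k)
    (hS : S = (P I - P J) / A)
    (hPi : ∀ j ∈ Icc (I + 1) J,
      Pi j = (θ j * P j) / (A * P (j - 1)) * (P J + S * ∑ k ∈ Icc j J, θ k * P k)) :
    ∀ j ∈ Icc (I + 1) J,
      R j * Pi j / S =
        (θ j * R j) / (1 + θ j * R j) *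
          (1 / ((∏ i ∈ Icc (I + 1) J, (1 + θ i * R i)) - 1) +
            (1 / A) * ∑ k ∈ Icc j J, θ k * P k) := by
  have hA_pos : 0 < A := hA ▸ sum_pos
    (fun k hk => mul_pos (hθ k hk) (hP k (by simp at hk ⊢; omega))) (nonempty_Icc.mpr hIJ)
  have h_one_add : ∀ i ∈ Icc (I + 1) J, 1 + θ i * R i = P (i - 1) / P i := fun i hi => by
    rw [hR i hi, one_add_mul_div_sub_one (hθ i hi).ne']
  have h_prod : ∏ i ∈ Icc (I + 1) J, (1 + θ i * R i) = P I / P J :=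
    (prod_congr rfl h_one_add).trans (prod_Icc_div_telescope hIJ.le fun i hi => (hP i hi).ne')
  intro j hj
  have hPj := hP j (by simp at hj ⊢; omega)
  have hPj' := hP (j - 1) (by simp at hj ⊢; omega)
  have hPJ := hP J (by simp; omega)
  have hθj := hθ j hj
  have hPIJ' : P I - P J ≠ 0 := sub_ne_zero.mpr hPIJ.ne'
  rw [h_prod, hPi j hj, hS, h_one_add j hj, hR j hj]
  field_simp
end

section
/- Hypersphere parametrization of correlation matrices: let B be an n×n real lower triangular matrix whose entries are b_{i,j} = cos(ω_{i,j}) ∏_{k=0}^{j−1} sin(ω_{i,k}) for 0 < j < i, b_{i,i} = ∏_{k=0}^{i−1} sin(ω_{i,k}), and b_{0,0} = 1 (empty products equal 1), for arbitrary angles ω_{i,k} ∈ ℝ. Then Σ = B Bᵀ is a symmetric positive semidefinite matrix with all diagonal entries equal to 1, i.e., a correlation matrix. -/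
/-!
`B * Bᵀ` is a Gram matrix, hence positive semidefinite. Its `i`-th diagonal entry is the squared
norm of row `i`, and that norm telescopes to `1`: the last two terms `(cos ωₘ · P)² + (sin ωₘ · P)²`
of a row with `m + 1` angles merge into `P²` by `cos² + sin² = 1`.
-/

open Finset Real Matrix

noncomputable def sphericalRow (θ : ℕ → ℝ) (i j : ℕ) : ℝ :=
  if j < i then cos (θ j) * ∏ k ∈ range j, sin (θ k)
  else if j = i then ∏ k ∈ range i, sin (θ k)
  else 0

theorem sum_sq_cos_mul_prod_sin_add_sq_prod_sin (θ : ℕ → ℝ) (m : ℕ) :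
    ∑ j ∈ range m, (cos (θ j) * ∏ k ∈ range j, sin (θ k)) ^ 2
      + (∏ k ∈ range m, sin (θ k)) ^ 2 = 1 := by
  induction m with
  | zero => simp
  | succ m ih =>
    rw [sum_range_succ, prod_range_succ, ← ih]
    linear_combination (∏ k ∈ range m, sin (θ k)) ^ 2 * cos_sq_add_sin_sq (θ m)

theorem sum_range_sphericalRow_sq (θ : ℕ → ℝ) {i m : ℕ} (him : i < m) :
    ∑ j ∈ range m, sphericalRow θ i j ^ 2 = 1 := by
  induction m, him using Nat.le_induction with
  | base =>
    rw [sum_range_succ, ← sum_sq_cos_mul_prod_sin_add_sq_prod_sin θ i]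
    congr 1
    · exact sum_congr rfl fun j hj => by simp [sphericalRow, mem_range.mp hj]
    · simp [sphericalRow]
  | succ m him ih =>
    rw [sum_range_succ, ih]
    rw [sphericalRow, if_neg (by omega), if_neg (by omega)]
    simp

theorem hypersphere_parametrization_correlation_general
    (n : ℕ)
    (ω : Fin n → ℕ → ℝ)
    (B : Matrix (Fin n) (Fin n) ℝ)
    (hB : ∀ i j : Fin n,
      B i j =
        if (j : ℕ) < (i : ℕ) then
          Real.cos (ω i j) * ∏ k ∈ range j, Real.sin (ω i k)
        else if (j : ℕ) = (i : ℕ) then ∏ k ∈ range i, Real.sin (ω i k)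
        else 0) :
    (B * Bᵀ).PosSemidef ∧ ∀ i : Fin n, (B * Bᵀ) i i = 1 := by
  refine ⟨by simpa using posSemidef_self_mul_conjTranspose B, fun i => ?_⟩
  have hrow : ∀ j : Fin n, B i j = sphericalRow (ω i) i j := fun j => hB i j
  calc (B * Bᵀ) i i = ∑ j : Fin n, sphericalRow (ω i) i j ^ 2 := by
        simp only [mul_apply, transpose_apply, hrow, sq]
    _ = 1 := by
        rw [Fin.sum_univ_eq_sum_range (fun j => sphericalRow (ω i) i j ^ 2)]
        exact sum_range_sphericalRow_sq (ω i) i.isLt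

/-- Hypersphere parametrization: if `B` is the lower triangular matrix built from
angles `ω` via spherical coordinates, then `Σ = B * Bᵀ` is a correlation matrix,
i.e. symmetric positive semidefinite with unit diagonal. -/
theorem hypersphere_parametrization_correlation
    (n : ℕ) (hn : 1 ≤ n)
    (ω : Fin n → ℕ → ℝ)
    (B : Matrix (Fin n) (Fin n) ℝ)
    (hB : ∀ i j : Fin n,
      B i j =
        if (j : ℕ) < (i : ℕ) then
          Real.cos (ω i j) * ∏ k ∈ range j, Real.sin (ω i k)
        else if (j : ℕ) = (i : ℕ) then ∏ k ∈ range i, Real.sin (ω i k)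
        else 0) :
    (B * Bᵀ).PosSemidef ∧ ∀ i : Fin n, (B * Bᵀ) i i = 1 :=
  hypersphere_parametrization_correlation_general n ω B hB
end
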